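/- The intersection ∩_{n=1}^∞ C_n of the defining sequence of Antoine's necklace is homeomorphic to the Cantor set. -/

import Mathlib

/-!
The intersection `K = ⋂ n, C n` is a nonempty compact metric space. It is totally disconnected,
because a connected subset of `K` lies in a single component of every `C n`, and these have
vanishing diameters. It is perfect: the component of `C n` through `p ∈ K` contains two distinct
components of `C (n + 1)`, each of which meets `K` by compactness, so `p` has another point of `K`
within the diameter of its component.

Such a space is homeomorphic to `ℕ → Bool` (Brouwer). Choose clopen sets `B i` such that for
every `ε` some `B 0, …, B (N - 1)` cover the space by sets of diameter `≤ ε`, and cut each nonempty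
clopen set along the first `B i` that meets both it and its complement. Starting from the whole
space this yields a binary Cantor scheme whose cells of depth `n` are cut by none of
`B 0, …, B (n - 1)`, so their diameters tend to zero uniformly, and the induced map
`(ℕ → Bool) → K` is a homeomorphism.
-/

open Set Topology Metric Filter

namespace CantorScheme

variable {β X : Type*} [Finite β] [TopologicalSpace β] [DiscreteTopology β] [MetricSpace X]
  [CompleteSpace X] {A : List β → Set X}

theorem nonempty_homeomorph (hroot : A [] = univ) (hanti : CantorScheme.Antitone A)
    (hcover : ∀ l, A l ⊆ ⋃ b, A (b :: l)) (hdisj : CantorScheme.Disjoint A)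
    (hclosed : ∀ l, IsClosed (A l)) (hne : ∀ l, (A l).Nonempty) (hdiam : VanishingDiam A) :
    Nonempty ((ℕ → β) ≃ₜ X) := by
  have hdom := (hanti.closureAntitone hclosed).map_of_vanishingDiam hdiam hne
  let F : (ℕ → β) → X := fun x => (inducedMap A).2 ⟨x, hdom ▸ mem_univ x⟩
  have hF : ∀ x n, F x ∈ A (PiNat.res x n) := fun x n => map_mem _ n
  have hsurj : F.Surjective := by
    intro y
    have hchild : ∀ l, y ∈ A l → ∃ b, y ∈ A (b :: l) := fun l hy => mem_iUnion.mp (hcover l hy)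
    have : Nonempty β := (hchild [] (hroot ▸ mem_univ y)).nonempty
    choose! c hc using hchild
    let addr : ℕ → List β := fun n => (fun l => c l :: l)^[n] []
    have haddr : ∀ n, y ∈ A (addr n) := by
      intro n
      induction n with
      | zero => exact hroot ▸ mem_univ y
      | succ n ih => simpa only [addr, Function.iterate_succ_apply'] using hc _ ih
    have hres : ∀ n, PiNat.res (fun n => c (addr n)) n = addr n := by
      intro n
      induction n with
      | zero => rfl
      | succ n ih => rw [PiNat.res_succ, ih]; simp only [addr, Function.iterate_succ_apply']
    refine ⟨fun n => c (addr n), eq_of_forall_dist_le fun ε hε => ?_⟩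
    obtain ⟨n, hn⟩ := hdiam.dist_lt ε hε (fun n => c (addr n))
    exact (hn _ (hF _ n) y (hres n ▸ haddr n)).le
  have hcont : Continuous F := hdiam.map_continuous.comp (by fun_prop)
  have hinj : F.Injective := fun x y hxy => by simpa using hdisj.map_injective hxy
  exact ⟨hcont.homeoOfEquivCompactToT2 (f := Equiv.ofBijective F ⟨hinj, hsurj⟩)⟩

end CantorScheme

namespace CuttingScheme

variable {X : Type*}

def Cuts (s U : Set X) : Prop := (U ∩ s).Nonempty ∧ (U \ s).Nonempty

theorem not_cuts_of_subset {s U V : Set X} (h : ¬Cuts s U) (hVU : V ⊆ U) : ¬Cuts s V :=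
  fun ⟨hin, hout⟩ =>
    h ⟨hin.mono (inter_subset_inter_left s hVU), hout.mono (sdiff_subset_sdiff_left hVU)⟩

theorem subset_of_not_cuts {s U : Set X} {x : X} (h : ¬Cuts s U) (hxU : x ∈ U) (hxs : x ∈ s) :
    U ⊆ s := by
  by_contra hU
  exact h ⟨⟨x, hxU, hxs⟩, sdiff_nonempty.mpr hU⟩

variable (B : ℕ → Set X)

/-- Junk value `0` when no `B i` cuts `U`; this never happens for the cells below, since in a
perfect space every nonempty open set is cut by some `B i`. -/
noncomputable def firstCut (U : Set X) : ℕ := sInf {i | Cuts (B i) U}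

noncomputable def cell : List Bool → Set X
  | [] => univ
  | true :: l => cell l ∩ B (firstCut B (cell l))
  | false :: l => cell l \ B (firstCut B (cell l))

def IsFineCovering [PseudoEMetricSpace X] : Prop :=
  ∀ ε > 0, ∃ N, ∀ x, ∃ i < N, x ∈ B i ∧ ediam (B i) ≤ ε

variable {B}

theorem antitone_cell : CantorScheme.Antitone (cell B) := fun l b => by
  cases b
  · exact sdiff_subset
  · exact inter_subset_left

theorem not_cuts_cell_cons (b : Bool) (l : List Bool) :
    ¬Cuts (B (firstCut B (cell B l))) (cell B (b :: l)) := by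
  cases b
  · exact fun h => h.1.ne_empty sdiff_inter_self
  · exact fun h => h.2.ne_empty (sdiff_eq_empty.mpr inter_subset_right)

theorem cell_subset_iUnion_cons (l : List Bool) : cell B l ⊆ ⋃ b, cell B (b :: l) := by
  intro x hx
  by_cases hxB : x ∈ B (firstCut B (cell B l))
  · exact mem_iUnion.mpr ⟨true, hx, hxB⟩
  · exact mem_iUnion.mpr ⟨false, hx, hxB⟩

theorem disjoint_cell : CantorScheme.Disjoint (cell B) := by
  intro l a b hab
  cases a <;> cases b
  all_goals first
    | exact absurd rfl hab
    | exact disjoint_sdiff_inter.symm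
    | exact disjoint_sdiff_inter

variable [MetricSpace X]

theorem isClopen_cell (hB : ∀ i, IsClopen (B i)) : ∀ l, IsClopen (cell B l)
  | [] => isClopen_univ
  | true :: l => (isClopen_cell hB l).inter (hB _)
  | false :: l => (isClopen_cell hB l).diff (hB _)

theorem ediam_le_of_not_cuts {N : ℕ} {ε : ENNReal}
    (hN : ∀ x, ∃ i < N, x ∈ B i ∧ ediam (B i) ≤ ε) {U : Set X} (hU : ∀ i < N, ¬Cuts (B i) U) :
    ediam U ≤ ε := by
  rcases U.eq_empty_or_nonempty with rfl | ⟨x, hx⟩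
  · simp
  obtain ⟨i, hiN, hxi, hi⟩ := hN x
  exact (ediam_mono (subset_of_not_cuts (hU i hiN) hx hxi)).trans hi

variable [PerfectSpace X]

theorem exists_cuts (hfine : IsFineCovering B) {U : Set X} (hU : IsOpen U) (hne : U.Nonempty) :
    ∃ i, Cuts (B i) U := by
  obtain ⟨x, hx⟩ := hne
  obtain ⟨y, hyx : y ≠ x, hyU⟩ :=
    (𝓝[≠] x).nonempty_of_mem (inter_mem_nhdsWithin {x}ᶜ (hU.mem_nhds hx))
  have hxy : edist x y ≠ 0 := (edist_pos.mpr hyx.symm).ne'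
  obtain ⟨N, hN⟩ := hfine (edist x y / 2) (ENNReal.half_pos hxy)
  obtain ⟨i, -, hxi, hi⟩ := hN x
  refine ⟨i, ⟨x, hx, hxi⟩, y, hyU, fun hyi => ?_⟩
  exact (ENNReal.half_lt_self hxy (edist_ne_top x y)).not_ge
    ((edist_le_ediam_of_mem hxi hyi).trans hi)

theorem cuts_firstCut (hfine : IsFineCovering B) {U : Set X} (hU : IsOpen U)
    (hne : U.Nonempty) : Cuts (B (firstCut B U)) U :=
  Nat.sInf_mem (exists_cuts hfine hU hne)

variable [Nonempty X]

theorem nonempty_cell (hfine : IsFineCovering B) (hB : ∀ i, IsClopen (B i)) :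
    ∀ l, (cell B l).Nonempty
  | [] => univ_nonempty
  | true :: l => (cuts_firstCut hfine (isClopen_cell hB l).isOpen (nonempty_cell hfine hB l)).1
  | false :: l => (cuts_firstCut hfine (isClopen_cell hB l).isOpen (nonempty_cell hfine hB l)).2

theorem not_cuts_cell (hfine : IsFineCovering B) (hB : ∀ i, IsClopen (B i)) :
    ∀ l, ∀ i < l.length, ¬Cuts (B i) (cell B l)
  | [] => fun i hi => absurd hi (Nat.not_lt_zero i)
  | b :: l => by
    intro i hi
    have hcut := cuts_firstCut hfine (isClopen_cell hB l).isOpen (nonempty_cell hfine hB l)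
    have hlen : l.length ≤ firstCut B (cell B l) :=
      not_lt.mp fun h => not_cuts_cell hfine hB l _ h hcut
    rcases (Nat.le_of_lt_succ hi |>.trans hlen).lt_or_eq with h | rfl
    · exact not_cuts_of_subset (Nat.notMem_of_lt_sInf h) (antitone_cell l b)
    · exact not_cuts_cell_cons b l

theorem vanishingDiam_cell (hfine : IsFineCovering B) (hB : ∀ i, IsClopen (B i)) :
    CantorScheme.VanishingDiam (cell B) := by
  intro x
  rw [ENNReal.tendsto_atTop_zero]
  intro ε hε
  obtain ⟨N, hN⟩ := hfine ε hε
  refine ⟨N, fun n hn => ediam_le_of_not_cuts hN fun i hi => ?_⟩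
  exact not_cuts_cell hfine hB _ i (by rw [PiNat.res_length]; omega)

end CuttingScheme

theorem CompactSpace.exists_forall_exists_lt_mem {X : Type*} [TopologicalSpace X]
    [CompactSpace X] {U : ℕ → Set X} (hU : ∀ i, IsOpen (U i)) (hcover : ∀ x, ∃ i, x ∈ U i) :
    ∃ N, ∀ x, ∃ i < N, x ∈ U i := by
  obtain ⟨N, hN⟩ := isCompact_univ.elim_directed_cover (accumulate U)
    (fun N => isOpen_biUnion fun i _ => hU i)
    (fun x _ => mem_iUnion.mpr ((hcover x).imp fun _ hi => subset_accumulate hi))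
    directed_accumulate
  exact ⟨N + 1, fun x => by simpa [accumulate_eq_biInter_lt] using hN (mem_univ x)⟩

open CuttingScheme in
theorem exists_isClopen_isFineCovering (X : Type*) [MetricSpace X] [CompactSpace X]
    [TotallyDisconnectedSpace X] [Nonempty X] :
    ∃ B : ℕ → Set X, (∀ i, IsClopen (B i)) ∧ IsFineCovering B := by
  obtain ⟨s, hs, hsc, hbasis⟩ := isTopologicalBasis_isClopen.exists_countable (α := X)
  obtain ⟨B, rfl⟩ := hsc.exists_eq_range (.of_sUnion_eq_univ hbasis.sUnion_eq)
  refine ⟨B, fun i => hs (mem_range_self i), fun ε hε => ?_⟩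
  have hsmall : ∀ x, ∃ i, x ∈ B i ∩ {_y | ediam (B i) ≤ ε} := fun x => by
    obtain ⟨_, ⟨i, rfl⟩, hxi, hi⟩ := hbasis.exists_subset_of_mem_open
      (mem_eball_self (ENNReal.half_pos hε.ne')) isOpen_eball
    exact ⟨i, hxi, (ediam_mono hi).trans (ediam_eball_le.trans ENNReal.mul_div_le)⟩
  obtain ⟨N, hN⟩ := CompactSpace.exists_forall_exists_lt_mem
    (fun i => (hs (mem_range_self i)).isOpen.inter isOpen_const) hsmall
  exact ⟨N, fun x => (hN x).imp fun i ⟨hi, hxi, hdi⟩ => ⟨hi, hxi, hdi⟩⟩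

open CuttingScheme in
theorem nonempty_homeomorph_nat_bool (X : Type*) [MetricSpace X] [CompactSpace X]
    [TotallyDisconnectedSpace X] [PerfectSpace X] [Nonempty X] :
    Nonempty (X ≃ₜ (ℕ → Bool)) := by
  obtain ⟨B, hB, hfine⟩ := exists_isClopen_isFineCovering X
  exact (CantorScheme.nonempty_homeomorph rfl antitone_cell cell_subset_iUnion_cons
    disjoint_cell (fun l => (isClopen_cell hB l).isClosed)
    (nonempty_cell hfine hB) (vanishingDiam_cell hfine hB)).map Homeomorph.symm

theorem IsClosed.connectedComponentIn {X : Type*} [TopologicalSpace X] {F : Set X}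
    (hF : IsClosed F) (x : X) : IsClosed (connectedComponentIn F x) := by
  by_cases hx : x ∈ F
  · refine closure_subset_iff_isClosed.mp
      (isPreconnected_connectedComponentIn.closure.subset_connectedComponentIn
        (subset_closure (mem_connectedComponentIn hx))
        (closure_minimal (connectedComponentIn_subset _ _) hF))
  · rw [connectedComponentIn_eq_empty hx]
    exact isClosed_empty

theorem perfectSpace_of_forall_exists_ne_dist_lt {X : Type*} [PseudoMetricSpace X]
    (h : ∀ x : X, ∀ ε > 0, ∃ y ≠ x, dist y x < ε) : PerfectSpace X :=
  perfectSpace_iff_forall_not_isolated.mpr fun x => nhdsWithin_basis_ball.neBot_iff.mpr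
    fun {ε} hε => let ⟨y, hyx, hy⟩ := h x ε hε; ⟨y, hy, hyx⟩

section NestedCompacts

variable {X : Type*} [MetricSpace X] {C : ℕ → Set X}

theorem exists_mem_iInter_mem_connectedComponentIn (hcomp : ∀ n, IsCompact (C n))
    (hnest : ∀ n, C (n + 1) ⊆ C n)
    (hmeet : ∀ n, ∀ x ∈ C n, ∃ y ∈ C (n + 1), y ∈ connectedComponentIn (C n) x)
    {n : ℕ} {x : X} (hx : x ∈ C n) : ∃ p ∈ ⋂ m, C m, p ∈ connectedComponentIn (C n) x := by
  set Q := connectedComponentIn (C n) x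
  have hanti : Antitone C := antitone_nat_of_succ_le hnest
  have hQ : IsClosed Q := (hcomp n).isClosed.connectedComponentIn x
  have hmeets : ∀ m, (Q ∩ C (n + m)).Nonempty := by
    intro m
    induction m with
    | zero => exact ⟨x, mem_connectedComponentIn hx, hx⟩
    | succ m ih =>
      obtain ⟨y, hyQ, hy⟩ := ih
      obtain ⟨z, hz, hzy⟩ := hmeet _ y hy
      have hsub : connectedComponentIn (C (n + m)) y ⊆ Q :=
        (connectedComponentIn_mono y (hanti (Nat.le_add_right n m))).trans
          (connectedComponentIn_eq hyQ).symm.subset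
      exact ⟨z, hsub hzy, hz⟩
  obtain ⟨p, hp⟩ := IsCompact.nonempty_iInter_of_sequence_nonempty_isCompact_isClosed
    (fun m => Q ∩ C (n + m)) (fun m => inter_subset_inter_right Q (hnest _)) hmeets
    ((hcomp _).inter_left hQ) (fun m => hQ.inter (hcomp _).isClosed)
  simp only [mem_iInter] at hp
  exact ⟨p, mem_iInter.mpr fun k => hanti (Nat.le_add_left k n) (hp k).2, (hp 0).1⟩

theorem isTotallyDisconnected_iInter (hcomp : ∀ n, IsCompact (C n))
    (hdiam : ∀ ε > 0, ∃ n, ∀ x ∈ C n, diam (connectedComponentIn (C n) x) < ε) :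
    IsTotallyDisconnected (⋂ n, C n) := by
  intro t hts ht a ha b hb
  refine eq_of_forall_dist_le fun ε hε => ?_
  obtain ⟨n, hn⟩ := hdiam ε hε
  have hsub : t ⊆ connectedComponentIn (C n) a :=
    ht.subset_connectedComponentIn ha (hts.trans (iInter_subset C n))
  exact (dist_le_diam_of_mem ((hcomp n).isBounded.subset (connectedComponentIn_subset _ _))
    (hsub ha) (hsub hb)).trans (hn a (mem_iInter.mp (hts ha) n)).le

theorem perfectSpace_iInter (hcomp : ∀ n, IsCompact (C n)) (hnest : ∀ n, C (n + 1) ⊆ C n)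
    (hsplit : ∀ n, ∀ x ∈ C n, ∃ y ∈ C (n + 1), ∃ z ∈ C (n + 1),
      y ∈ connectedComponentIn (C n) x ∧ z ∈ connectedComponentIn (C n) x ∧
      connectedComponentIn (C (n + 1)) y ≠ connectedComponentIn (C (n + 1)) z)
    (hdiam : ∀ ε > 0, ∃ n, ∀ x ∈ C n, diam (connectedComponentIn (C n) x) < ε) :
    PerfectSpace (⋂ n, C n : Set X) := by
  have hreach : ∀ {m : ℕ} {x : X}, x ∈ C m →
      ∃ q ∈ ⋂ k, C k, q ∈ connectedComponentIn (C m) x :=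
    exists_mem_iInter_mem_connectedComponentIn hcomp hnest
      fun n x hx => (hsplit n x hx).imp fun _ ⟨hy, _, _, hyx, _⟩ => ⟨hy, hyx⟩
  refine perfectSpace_of_forall_exists_ne_dist_lt fun ⟨p, hp⟩ ε hε => ?_
  obtain ⟨n, hn⟩ := hdiam ε hε
  have hpn : p ∈ C n := mem_iInter.mp hp n
  obtain ⟨y, hy, z, hz, hyp, hzp, hyz⟩ := hsplit n p hpn
  obtain ⟨q, hq, hqy⟩ := hreach hy
  obtain ⟨r, hr, hrz⟩ := hreach hz
  have hqr : q ≠ r := fun h =>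
    hyz ((connectedComponentIn_eq hqy).trans (h ▸ connectedComponentIn_eq hrz).symm)
  have hnear {w v : X} (hw : w ∈ connectedComponentIn (C (n + 1)) v)
      (hv : v ∈ connectedComponentIn (C n) p) : dist w p < ε := by
    have hw' : w ∈ connectedComponentIn (C n) p :=
      connectedComponentIn_eq hv ▸ connectedComponentIn_mono v (hnest n) hw
    exact (dist_le_diam_of_mem ((hcomp n).isBounded.subset (connectedComponentIn_subset _ _))
      hw' (mem_connectedComponentIn hpn)).trans_lt (hn p hpn)
  by_cases hqp : q = p
  · exact ⟨⟨r, hr⟩, fun h => hqr (hqp.trans (congrArg Subtype.val h).symm), hnear hrz hzp⟩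
  · exact ⟨⟨q, hq⟩, fun h => hqp (congrArg Subtype.val h), hnear hqy hyp⟩

end NestedCompacts

/-- Abstract form of the fact that Antoine's necklace is a Cantor set: if `C` is a
nested sequence of nonempty compact subsets of a metric space such that every connected
component of `C n` contains (points of) at least two distinct components of `C (n+1)`,
and the diameters of the components of `C n` tend to `0`, then `⋂ n, C n` is
homeomorphic to the Cantor set `{0,1}^ℕ`. -/
theorem antoine_intersection_homeomorphic_cantor {X : Type*} [MetricSpace X]
    (C : ℕ → Set X)
    (hcomp : ∀ n, IsCompact (C n))
    (hne : ∀ n, (C n).Nonempty)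
    (hnest : ∀ n, C (n + 1) ⊆ C n)
    (hsplit : ∀ n, ∀ x ∈ C n, ∃ y ∈ C (n + 1), ∃ z ∈ C (n + 1),
      y ∈ connectedComponentIn (C n) x ∧ z ∈ connectedComponentIn (C n) x ∧
      connectedComponentIn (C (n + 1)) y ≠ connectedComponentIn (C (n + 1)) z)
    (hdiam : ∀ ε : ℝ, 0 < ε → ∃ N : ℕ, ∀ n ≥ N, ∀ x ∈ C n,
      Metric.diam (connectedComponentIn (C n) x) < ε) :
    Nonempty ((⋂ n, C n : Set X) ≃ₜ (ℕ → Bool)) := by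
  have hdiam' : ∀ ε > 0, ∃ n, ∀ x ∈ C n, diam (connectedComponentIn (C n) x) < ε :=
    fun ε hε => (hdiam ε hε).imp fun N hN => hN N le_rfl
  have hclosed : IsClosed (⋂ n, C n) := isClosed_iInter fun n => (hcomp n).isClosed
  have : CompactSpace (⋂ n, C n : Set X) :=
    isCompact_iff_compactSpace.mp ((hcomp 0).of_isClosed_subset hclosed (iInter_subset C 0))
  have : Nonempty (⋂ n, C n : Set X) :=
    (IsCompact.nonempty_iInter_of_sequence_nonempty_isCompact_isClosed C hnest hne (hcomp 0)
      fun n => (hcomp n).isClosed).to_subtype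
  have := totallyDisconnectedSpace_subtype_iff.mpr (isTotallyDisconnected_iInter hcomp hdiam')
  have := perfectSpace_iInter hcomp hnest hsplit hdiam'
  exact nonempty_homeomorph_nat_bool _
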